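/- Let d be a positive integer, J ↦ J' an involution of {1,...,d}, and λ_{IJ} = exp(−2πiθ_{IJ}) with θ_{IJ} real, θ_{IJ} = −θ_{JI} = −θ_{IJ'}. Define the d×d matrices K_{JL} := E_{JL'} − λ_{JL} E_{LJ'}, where E_{JK} are the elementary matrices. Then: (i) K_{JL} = −λ_{JL} K_{LJ}; (ii) with Q the permutation matrix Q_{JK} = δ_{J'K}, the entries satisfy ((K_{JL})^t Q)_{AB} = −λ_{AB} (Q K_{JL})_{AB}; (iii) the matrices close the braided Lie algebra so_θ(d) under the braided commutator [K_{IJ}, K_{ST}] := K_{IJ}K_{ST} − λ_{IS}λ_{IT}λ_{JS}λ_{JT} K_{ST}K_{IJ}, namely [K_{IJ}, K_{ST}] = δ_{JS'} K_{IT} − λ_{IJ} δ_{IS'} K_{JT} − λ_{ST}(δ_{JT'} K_{IS} − λ_{IJ} δ_{IT'} K_{JS}). -/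

import Mathlib

/-!
Since `E_{AB} E_{CD} = δ_{BC} E_{AD}`, the product `K_{IJ} K_{ST}` is a sum of four elementary
matrices, one for each contraction `δ_{JS'}, δ_{JT'}, δ_{IS'}, δ_{IT'}`. The braided commutator
therefore splits into four independent identities, and in each of them the braiding factor
`λ_{IS} λ_{IT} λ_{JS} λ_{JT}`, evaluated where the contraction is nonzero, collapses to the
coefficient on the right-hand side by `λ_{JJ} = 1`, `λ_{IJ} λ_{JI} = 1` and `λ_{IJ'} = λ_{JI}`.
Part (ii) is the same kind of bookkeeping for single entries.
-/

noncomputable section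

open scoped BigOperators Matrix

namespace Statement15

def E (d : ℕ) (J K : Fin d) : Matrix (Fin d) (Fin d) ℂ := Matrix.single J K 1

section Braiding

variable {n R : Type*}

theorem ite_one_mul_congr {M : Type*} [MulZeroOneClass M] {p : Prop} [Decidable p] {a b : M}
    (h : p → a = b) :
    (if p then 1 else 0) * a = (if p then 1 else 0) * b := by
  split_ifs with hp
  · rw [h hp]
  · rw [zero_mul, zero_mul]

theorem single_one_mul_single_one [Semiring R] [DecidableEq n] [Fintype n] (i j k l : n) :
    (Matrix.single i j 1 : Matrix n n R) * Matrix.single k l 1 =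
      (if j = k then (1 : R) else 0) • Matrix.single i l 1 := by
  split_ifs with h
  · rw [h, Matrix.single_mul_single_same, mul_one, one_smul]
  · rw [Matrix.single_mul_single_of_ne (h := h), zero_smul]

/-- The multiplicative form of `θ_{II} = 0`, `θ_{IJ} = −θ_{JI}` and `θ_{IJ'} = −θ_{IJ}`. -/
structure IsInvolutiveBraiding [CommMonoid R] (σ : n → n) (lam : n → n → R) : Prop where
  apply_self : ∀ I, lam I I = 1
  mul_apply_swap : ∀ I J, lam I J * lam J I = 1
  apply_right : ∀ I J, lam I (σ J) = lam J I

namespace IsInvolutiveBraiding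

variable [CommMonoid R] {σ : n → n} {lam : n → n → R}

theorem apply_left (h : IsInvolutiveBraiding σ lam) (I J : n) : lam (σ I) J = lam J I :=
  calc lam (σ I) J = lam (σ I) J * (lam I J * lam J I) := by rw [h.mul_apply_swap, mul_one]
    _ = lam (σ I) J * lam J (σ I) * lam J I := by rw [h.apply_right, mul_assoc]
    _ = lam J I := by rw [h.mul_apply_swap, one_mul]

end IsInvolutiveBraiding

theorem isInvolutiveBraiding_exp {σ : n → n} {θ : n → n → ℝ}
    (hθ_swap : ∀ I J, θ I J = -θ J I) (hθ_right : ∀ I J, θ I (σ J) = -θ I J) (c : ℂ) :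
    IsInvolutiveBraiding σ fun I J => Complex.exp (c * θ I J) where
  apply_self I := by
    rw [show θ I I = 0 by linarith [hθ_swap I I], Complex.ofReal_zero, mul_zero, Complex.exp_zero]
  mul_apply_swap I J := by
    rw [← Complex.exp_add, hθ_swap I J, Complex.ofReal_neg, mul_neg, neg_add_cancel,
      Complex.exp_zero]
  apply_right I J := by
    rw [hθ_right, hθ_swap I J, neg_neg]

variable [CommRing R] [DecidableEq n] (σ : n → n) (lam : n → n → R)

def soThetaGen (J L : n) : Matrix n n R :=
  Matrix.single J (σ L) 1 - lam J L • Matrix.single L (σ J) 1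

variable {σ lam}

theorem soThetaGen_eq_neg_smul_swap (h : IsInvolutiveBraiding σ lam) (J L : n) :
    soThetaGen σ lam J L = -(lam J L • soThetaGen σ lam L J) := by
  rw [soThetaGen, soThetaGen, smul_sub, smul_smul, h.mul_apply_swap, one_smul, neg_sub]

theorem soThetaGen_apply (J L A B : n) :
    soThetaGen σ lam J L A B =
      (if J = A ∧ σ L = B then 1 else 0) - lam J L * if L = A ∧ σ J = B then 1 else 0 := by
  simp [soThetaGen, Matrix.single_apply]

theorem soThetaGen_transpose_mul_permMatrix [Fintype n] (hσ : Function.Involutive σ)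
    (h : IsInvolutiveBraiding σ lam) (J L A B : n) :
    ((soThetaGen σ lam J L)ᵀ * (hσ.toPerm σ).permMatrix R) A B =
      -lam A B * ((hσ.toPerm σ).permMatrix R * soThetaGen σ lam J L) A B := by
  rw [PEquiv.mul_toMatrix_toPEquiv, PEquiv.toMatrix_toPEquiv_mul, Function.Involutive.toPerm_symm]
  show soThetaGen σ lam J L (σ B) A = -lam A B * soThetaGen σ lam J L (σ A) B
  have hswap : ∀ X Y Z W, (X = σ Y ∧ σ Z = W) ↔ (Z = σ W ∧ σ X = Y) := fun X Y Z W =>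
    (and_congr hσ.eq_iff.symm hσ.eq_iff).trans and_comm
  simp only [soThetaGen_apply, hswap J A, hswap L A]
  have hJL := ite_one_mul_congr (p := L = σ B ∧ σ J = A) (a := lam J L) (b := lam A B)
    fun ⟨hL, hA⟩ => by rw [← hA, hL, h.apply_left, h.apply_right]
  have hLJ := ite_one_mul_congr (p := J = σ B ∧ σ L = A) (a := 1) (b := lam A B * lam J L)
    fun ⟨hJ, hA⟩ => by rw [← hA, hJ, h.apply_left, h.apply_left, h.mul_apply_swap]
  linear_combination hLJ - hJL

theorem soThetaGen_mul_soThetaGen [Fintype n] (hσ : Function.Involutive σ) (I J S T : n) :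
    soThetaGen σ lam I J * soThetaGen σ lam S T =
      (if J = σ S then (1 : R) else 0) • Matrix.single I (σ T) 1
        - (lam S T * if J = σ T then 1 else 0) • Matrix.single I (σ S) 1
        - (lam I J * if I = σ S then 1 else 0) • Matrix.single J (σ T) 1
        + (lam I J * lam S T * if I = σ T then 1 else 0) • Matrix.single J (σ S) 1 := by
  simp only [soThetaGen, sub_mul, mul_sub, Matrix.smul_mul, Matrix.mul_smul,
    single_one_mul_single_one, hσ.eq_iff, smul_smul]
  module

theorem soThetaGen_braided_commutator [Fintype n] (hσ : Function.Involutive σ)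
    (h : IsInvolutiveBraiding σ lam) (I J S T : n) :
    soThetaGen σ lam I J * soThetaGen σ lam S T
        - (lam I S * lam I T * lam J S * lam J T) •
            (soThetaGen σ lam S T * soThetaGen σ lam I J) =
        (if J = σ S then (1 : R) else 0) • soThetaGen σ lam I T
          - lam I J • ((if I = σ S then (1 : R) else 0) • soThetaGen σ lam J T)
          - lam S T • ((if J = σ T then (1 : R) else 0) • soThetaGen σ lam I S
              - lam I J • ((if I = σ T then (1 : R) else 0) • soThetaGen σ lam J S)) := by
  set μ := lam I S * lam I T * lam J S * lam J T
  have hS : ∀ X, (S = σ X ↔ X = σ S) := fun _ => eq_comm.trans hσ.eq_iff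
  have hT : ∀ X, (T = σ X ↔ X = σ T) := fun _ => eq_comm.trans hσ.eq_iff
  have hJS := ite_one_mul_congr (p := J = σ S) (a := μ * (lam S T * lam I J)) (b := lam I T)
    fun hJ => by
      subst hJ
      simp only [μ, h.apply_left, h.apply_right, h.apply_self, mul_one]
      linear_combination lam I T * lam I S * lam S I * h.mul_apply_swap S T
        + lam I T * h.mul_apply_swap I S
  have hIS := ite_one_mul_congr (p := I = σ S) (a := μ * lam S T) (b := lam I J * lam J T)
    fun hI => by
      subst hI
      simp only [μ, h.apply_left, h.apply_self, one_mul]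
      linear_combination lam J S * lam J T * h.mul_apply_swap T S
  have hJT := ite_one_mul_congr (p := J = σ T) (a := μ * lam I J) (b := lam S T * lam I S)
    fun hJ => by
      subst hJ
      simp only [μ, h.apply_left, h.apply_right, h.apply_self, mul_one]
      linear_combination lam S T * lam I S * h.mul_apply_swap I T
  have hIT := ite_one_mul_congr (p := I = σ T) (a := μ) (b := lam S T * lam I J * lam J S)
    fun hI => by
      subst hI
      simp only [μ, h.apply_left, h.apply_self]
      ring
  rw [soThetaGen_mul_soThetaGen hσ I J S T, soThetaGen_mul_soThetaGen hσ S T I J]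
  simp only [soThetaGen, hS I, hS J, hT I, hT J]
  linear_combination (norm := module) -(hJS • Matrix.single T (σ I) (1 : R))
    + hIS • Matrix.single T (σ J) (1 : R) + hJT • Matrix.single S (σ I) (1 : R)
    - hIT • Matrix.single S (σ J) (1 : R)

end Braiding

theorem braided_soTheta_matrices
    (d : ℕ)
    -- the involution `J ↦ J'`
    (inv : Fin d → Fin d) (hinv : ∀ I, inv (inv I) = I)
    -- real deformation parameters with `θ_{IJ} = −θ_{JI} = −θ_{IJ'}`
    (θ : Fin d → Fin d → ℝ)
    (hθ₁ : ∀ I J, θ I J = - θ J I)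
    (hθ₂ : ∀ I J, θ I (inv J) = - θ I J)
    -- `λ_{IJ} = exp(−2πi θ_{IJ})`
    (lam : Fin d → Fin d → ℂ)
    (hlam : ∀ I J, lam I J = Complex.exp (-(2 * (Real.pi : ℂ) * Complex.I) * (θ I J : ℂ)))
    -- the matrices `K_{JL} := E_{JL'} − λ_{JL} E_{LJ'}`
    (Kmat : Fin d → Fin d → Matrix (Fin d) (Fin d) ℂ)
    (hK : ∀ J L, Kmat J L = E d J (inv L) - lam J L • E d L (inv J))
    -- the permutation matrix `Q_{JK} = δ_{J'K}`
    (Q : Matrix (Fin d) (Fin d) ℂ)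
    (hQ : ∀ J K, Q J K = if inv J = K then 1 else 0) :
    -- (i) braided antisymmetry
    (∀ J L, Kmat J L = - (lam J L • Kmat L J)) ∧
    -- (ii) entry-wise antisymmetry with respect to `Q`
    (∀ J L A B, ((Kmat J L)ᵀ * Q) A B = - lam A B * ((Q * Kmat J L) A B)) ∧
    -- (iii) the braided `so_θ(d)` commutation relations
    (∀ I J S T,
      Kmat I J * Kmat S T - (lam I S * lam I T * lam J S * lam J T) • (Kmat S T * Kmat I J)
        = (if J = inv S then (1 : ℂ) else 0) • Kmat I T
          - lam I J • ((if I = inv S then (1 : ℂ) else 0) • Kmat J T)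
          - lam S T • ((if J = inv T then (1 : ℂ) else 0) • Kmat I S
              - lam I J • ((if I = inv T then (1 : ℂ) else 0) • Kmat J S))) := by
  have hbraid : IsInvolutiveBraiding inv lam := by
    rw [funext₂ hlam]
    exact isInvolutiveBraiding_exp hθ₁ hθ₂ _
  obtain rfl : Kmat = soThetaGen inv lam := funext₂ hK
  have hσ : Function.Involutive inv := hinv
  obtain rfl : Q = (hσ.toPerm inv).permMatrix ℂ := by
    ext J K
    simp [hQ, PEquiv.toMatrix_apply]
  exact ⟨soThetaGen_eq_neg_smul_swap hbraid, soThetaGen_transpose_mul_permMatrix hσ hbraid,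
    soThetaGen_braided_commutator hσ hbraid⟩

end Statement15
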